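/- arXiv:2311.11216 — 2 statements merged into one kernel-verified Lean document; each statement's English description precedes it below -/
import Mathlib

section
/- Fix real scores q_{ij} and a statistic value T ∈ R, with index sets I_1 and I_2 partitioning {1,...,I}. For p = (p_{ij}) define E_p(T) = Σ_{i∈I_1} Σ_j p_{ij} q_{ij} − Σ_{i∈I_2} Σ_j (1 − p_{ij}) q_{ij} and var_p(T) = Σ_i { Σ_j p_{ij} q_{ij}^2 − (Σ_j p_{ij} q_{ij})^2 }. Then for any c ≥ 0, the function g(p) = {T − E_p(T)}^2 − c·var_p(T) is convex on R^N. -/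
open Finset

theorem stmt1 (I : ℕ) (n : Fin I → ℕ) (q : (Σ i : Fin I, Fin (n i)) → ℝ)
    (T : ℝ) (I1 I2 : Finset (Fin I)) (hdisj : Disjoint I1 I2)
    (hunion : I1 ∪ I2 = Finset.univ) (c : ℝ) (hc : 0 ≤ c) :
    ConvexOn ℝ Set.univ (fun p : (Σ i : Fin I, Fin (n i)) → ℝ =>
      (T - ((∑ i ∈ I1, ∑ j : Fin (n i), p ⟨i, j⟩ * q ⟨i, j⟩)
          - ∑ i ∈ I2, ∑ j : Fin (n i), (1 - p ⟨i, j⟩) * q ⟨i, j⟩)) ^ 2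
      - c * ∑ i : Fin I, ((∑ j : Fin (n i), p ⟨i, j⟩ * q ⟨i, j⟩ ^ 2)
          - (∑ j : Fin (n i), p ⟨i, j⟩ * q ⟨i, j⟩) ^ 2)) := by
  classical
  constructor
  · exact convex_univ
  intro x _ y _ a b ha hb hab
  simp only [smul_eq_mul, Pi.add_apply, Pi.smul_apply]
  have sqle : ∀ u v : ℝ, (a * u + b * v) ^ 2 ≤ a * u ^ 2 + b * v ^ 2 := by
    intro u v
    nlinarith [mul_nonneg (mul_nonneg ha hb) (sq_nonneg (u - v)), sq_nonneg (u - v)]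
  -- linearity of inner weighted sums
  have keyq : ∀ i : Fin I,
      (∑ j : Fin (n i), (a * x ⟨i, j⟩ + b * y ⟨i, j⟩) * q ⟨i, j⟩)
        = a * (∑ j : Fin (n i), x ⟨i, j⟩ * q ⟨i, j⟩)
          + b * (∑ j : Fin (n i), y ⟨i, j⟩ * q ⟨i, j⟩) := by
    intro i
    rw [Finset.mul_sum, Finset.mul_sum, ← Finset.sum_add_distrib]
    exact Finset.sum_congr rfl fun j _ => by ring
  have key2 : ∀ i : Fin I,
      (∑ j : Fin (n i), (a * x ⟨i, j⟩ + b * y ⟨i, j⟩) * q ⟨i, j⟩ ^ 2)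
        = a * (∑ j : Fin (n i), x ⟨i, j⟩ * q ⟨i, j⟩ ^ 2)
          + b * (∑ j : Fin (n i), y ⟨i, j⟩ * q ⟨i, j⟩ ^ 2) := by
    intro i
    rw [Finset.mul_sum, Finset.mul_sum, ← Finset.sum_add_distrib]
    exact Finset.sum_congr rfl fun j _ => by ring
  simp only [sub_mul, one_mul, Finset.sum_sub_distrib, keyq, key2,
    Finset.sum_add_distrib, ← Finset.mul_sum]
  set sx : Fin I → ℝ := fun i => ∑ j : Fin (n i), x ⟨i, j⟩ * q ⟨i, j⟩ with hsx
  set sy : Fin I → ℝ := fun i => ∑ j : Fin (n i), y ⟨i, j⟩ * q ⟨i, j⟩ with hsy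
  have hD : ∑ i : Fin I, (a * sx i + b * sy i) ^ 2
      ≤ a * ∑ i : Fin I, sx i ^ 2 + b * ∑ i : Fin I, sy i ^ 2 := by
    rw [Finset.mul_sum, Finset.mul_sum, ← Finset.sum_add_distrib]
    exact Finset.sum_le_sum fun i _ => sqle (sx i) (sy i)
  have hDc := mul_le_mul_of_nonneg_left hD hc
  set K : ℝ := ∑ i ∈ I2, ∑ j : Fin (n i), q ⟨i, j⟩ with hK
  have hA := sqle (T - ((∑ i ∈ I1, sx i) - (K - ∑ i ∈ I2, sx i)))
      (T - ((∑ i ∈ I1, sy i) - (K - ∑ i ∈ I2, sy i)))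
  have hu : T - ((a * ∑ i ∈ I1, sx i + b * ∑ i ∈ I1, sy i)
        - (K - (a * ∑ i ∈ I2, sx i + b * ∑ i ∈ I2, sy i)))
      = a * (T - ((∑ i ∈ I1, sx i) - (K - ∑ i ∈ I2, sx i)))
        + b * (T - ((∑ i ∈ I1, sy i) - (K - ∑ i ∈ I2, sy i))) := by
    linear_combination (-T - K) * hab
  rw [hu]
  linarith [hA, hDc]
end

section
/- The set Δ = { p ∈ R^N : {S − E_p(S)}^2 − χ²·var_p(S) ≤ 0 } is convex, where E_p(S) = Σ_{i∈I_1} Σ_j p_{ij} s_{ij} − Σ_{i∈I_2} Σ_j (1 − p_{ij}) s_{ij}, var_p(S) = Σ_i { Σ_j p_{ij} s_{ij}^2 − (Σ_j p_{ij} s_{ij})^2 }, χ² ≥ 0 is a constant, and s_{ij} are fixed reals. -/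
open Finset

theorem stmt9 (I : ℕ) (n : Fin I → ℕ) (s : (Σ i : Fin I, Fin (n i)) → ℝ)
    (S : ℝ) (I1 I2 : Finset (Fin I)) (hdisj : Disjoint I1 I2)
    (hunion : I1 ∪ I2 = Finset.univ) (χ2 : ℝ) (hχ2 : 0 ≤ χ2) :
    Convex ℝ {p : (Σ i : Fin I, Fin (n i)) → ℝ |
      (S - ((∑ i ∈ I1, ∑ j : Fin (n i), p ⟨i, j⟩ * s ⟨i, j⟩)
          - ∑ i ∈ I2, ∑ j : Fin (n i), (1 - p ⟨i, j⟩) * s ⟨i, j⟩)) ^ 2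
      - χ2 * ∑ i : Fin I, ((∑ j : Fin (n i), p ⟨i, j⟩ * s ⟨i, j⟩ ^ 2)
          - (∑ j : Fin (n i), p ⟨i, j⟩ * s ⟨i, j⟩) ^ 2) ≤ 0} := by
  intro p hp q hq a b ha hb hab
  simp only [Set.mem_setOf_eq] at hp hq ⊢
  have hb' : b = 1 - a := by linarith
  subst hb'
  have hpt : ∀ x : (Σ i : Fin I, Fin (n i)),
      (a • p + (1 - a) • q) x = a * p x + (1 - a) * q x := by
    intro x; simp
  have h1 : (∑ i ∈ I1, ∑ j : Fin (n i), (a • p + (1 - a) • q) ⟨i, j⟩ * s ⟨i, j⟩)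
      = a * (∑ i ∈ I1, ∑ j : Fin (n i), p ⟨i, j⟩ * s ⟨i, j⟩)
        + (1 - a) * (∑ i ∈ I1, ∑ j : Fin (n i), q ⟨i, j⟩ * s ⟨i, j⟩) := by
    rw [Finset.mul_sum, Finset.mul_sum, ← Finset.sum_add_distrib]
    refine Finset.sum_congr rfl fun i _ => ?_
    rw [Finset.mul_sum, Finset.mul_sum, ← Finset.sum_add_distrib]
    refine Finset.sum_congr rfl fun j _ => ?_
    rw [hpt ⟨i, j⟩]; ring
  have h2 : (∑ i ∈ I2, ∑ j : Fin (n i), (1 - (a • p + (1 - a) • q) ⟨i, j⟩) * s ⟨i, j⟩)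
      = a * (∑ i ∈ I2, ∑ j : Fin (n i), (1 - p ⟨i, j⟩) * s ⟨i, j⟩)
        + (1 - a) * (∑ i ∈ I2, ∑ j : Fin (n i), (1 - q ⟨i, j⟩) * s ⟨i, j⟩) := by
    rw [Finset.mul_sum, Finset.mul_sum, ← Finset.sum_add_distrib]
    refine Finset.sum_congr rfl fun i _ => ?_
    rw [Finset.mul_sum, Finset.mul_sum, ← Finset.sum_add_distrib]
    refine Finset.sum_congr rfl fun j _ => ?_
    rw [hpt ⟨i, j⟩]; ring
  have hX : ∀ i : Fin I, (∑ j : Fin (n i), (a • p + (1 - a) • q) ⟨i, j⟩ * s ⟨i, j⟩)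
      = a * (∑ j : Fin (n i), p ⟨i, j⟩ * s ⟨i, j⟩)
        + (1 - a) * (∑ j : Fin (n i), q ⟨i, j⟩ * s ⟨i, j⟩) := by
    intro i
    rw [Finset.mul_sum, Finset.mul_sum, ← Finset.sum_add_distrib]
    refine Finset.sum_congr rfl fun j _ => ?_
    rw [hpt ⟨i, j⟩]; ring
  have hX2 : ∀ i : Fin I, (∑ j : Fin (n i), (a • p + (1 - a) • q) ⟨i, j⟩ * s ⟨i, j⟩ ^ 2)
      = a * (∑ j : Fin (n i), p ⟨i, j⟩ * s ⟨i, j⟩ ^ 2)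
        + (1 - a) * (∑ j : Fin (n i), q ⟨i, j⟩ * s ⟨i, j⟩ ^ 2) := by
    intro i
    rw [Finset.mul_sum, Finset.mul_sum, ← Finset.sum_add_distrib]
    refine Finset.sum_congr rfl fun j _ => ?_
    rw [hpt ⟨i, j⟩]; ring
  -- variance is concave
  have hvar : a * (∑ i : Fin I, ((∑ j : Fin (n i), p ⟨i, j⟩ * s ⟨i, j⟩ ^ 2)
          - (∑ j : Fin (n i), p ⟨i, j⟩ * s ⟨i, j⟩) ^ 2))
      + (1 - a) * (∑ i : Fin I, ((∑ j : Fin (n i), q ⟨i, j⟩ * s ⟨i, j⟩ ^ 2)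
          - (∑ j : Fin (n i), q ⟨i, j⟩ * s ⟨i, j⟩) ^ 2))
      ≤ ∑ i : Fin I, ((∑ j : Fin (n i), (a • p + (1 - a) • q) ⟨i, j⟩ * s ⟨i, j⟩ ^ 2)
          - (∑ j : Fin (n i), (a • p + (1 - a) • q) ⟨i, j⟩ * s ⟨i, j⟩) ^ 2) := by
    rw [Finset.mul_sum, Finset.mul_sum, ← Finset.sum_add_distrib]
    refine Finset.sum_le_sum fun i _ => ?_
    rw [hX i, hX2 i]
    nlinarith [sq_nonneg ((∑ j : Fin (n i), p ⟨i, j⟩ * s ⟨i, j⟩)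
        - (∑ j : Fin (n i), q ⟨i, j⟩ * s ⟨i, j⟩)), mul_nonneg ha hb]
  rw [h1, h2]
  set u : ℝ := S - ((∑ i ∈ I1, ∑ j : Fin (n i), p ⟨i, j⟩ * s ⟨i, j⟩)
      - ∑ i ∈ I2, ∑ j : Fin (n i), (1 - p ⟨i, j⟩) * s ⟨i, j⟩) with hu
  set v : ℝ := S - ((∑ i ∈ I1, ∑ j : Fin (n i), q ⟨i, j⟩ * s ⟨i, j⟩)
      - ∑ i ∈ I2, ∑ j : Fin (n i), (1 - q ⟨i, j⟩) * s ⟨i, j⟩) with hv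
  have hcomb : S - ((a * (∑ i ∈ I1, ∑ j : Fin (n i), p ⟨i, j⟩ * s ⟨i, j⟩)
        + (1 - a) * (∑ i ∈ I1, ∑ j : Fin (n i), q ⟨i, j⟩ * s ⟨i, j⟩))
      - (a * (∑ i ∈ I2, ∑ j : Fin (n i), (1 - p ⟨i, j⟩) * s ⟨i, j⟩)
        + (1 - a) * (∑ i ∈ I2, ∑ j : Fin (n i), (1 - q ⟨i, j⟩) * s ⟨i, j⟩)))
      = a * u + (1 - a) * v := by rw [hu, hv]; ring
  rw [hcomb]
  nlinarith [mul_le_mul_of_nonneg_left hvar hχ2, mul_nonneg (mul_nonneg ha hb) (sq_nonneg (u - v)),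
    mul_nonneg ha (mul_nonneg hχ2 hχ2), hp, hq]
end
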